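/- arXiv:2010.01457 — 5 statements merged into one kernel-verified Lean document; each statement's English description precedes it below -/
import Mathlib

section
/- For a random vector x chosen uniformly from the boundary of the k-dimensional ℓ_p unit sphere {x : ‖x‖_p = 1} with p ≥ 1 and k ≥ 2, the probability that |x₁| ≥ r satisfies Pr[|x₁| ≥ r] ≤ (1 - r^p)^{(k-1)/p} for all r ∈ [0,1]. -/
/-!
Write `t = (1 - r ^ p) ^ (1 / p)`. The map that multiplies every coordinate but the `i`-th by `t`
and replaces `y i` by `(t ^ p * y i ^ p + r ^ p) ^ (1 / p)` sends the half-sphere `{y i ≥ 0}`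
onto the cap `{x i ≥ r}` and is `t`-Lipschitz (its `i`-th coordinate is `1`-Lipschitz by
Minkowski's inequality), so the cap has at most `t ^ d` times the `d`-dimensional Hausdorff measure
of the half-sphere. The reflection `x i ↦ -x i` shows that the two caps `{± x i ≥ r}` have equal
measure, and that the half-sphere has at most half the measure of the sphere, because the
equator `{x i = 0}` is an ℓ_p sphere of one dimension less, hence null.
-/

open MeasureTheory Set Function
open scoped ENNReal NNReal

variable {ι : Type*} [Fintype ι]

theorem abs_rpow_add_rpow_one_div_sub_le {p : ℝ} (hp : 1 ≤ p) (a b c : ℝ) :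
    |(|a| ^ p + |c| ^ p) ^ (1 / p) - (|b| ^ p + |c| ^ p) ^ (1 / p)| ≤ |a - b| := by
  have : Fact (1 ≤ ENNReal.ofReal p) := ⟨ENNReal.one_le_ofReal.mpr hp⟩
  have hp' : 0 < (ENNReal.ofReal p).toReal := by rw [ENNReal.toReal_ofReal (by linarith)]; linarith
  have hnorm : ∀ u v : ℝ, ‖WithLp.toLp (ENNReal.ofReal p) (u, v)‖ = (|u| ^ p + |v| ^ p) ^ (1 / p) :=
    fun u v => by simp [WithLp.prod_norm_eq_add hp', ENNReal.toReal_ofReal (by linarith : 0 ≤ p)]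
  have := abs_norm_sub_norm_le (WithLp.toLp (ENNReal.ofReal p) (a, c))
    (WithLp.toLp (ENNReal.ofReal p) (b, c))
  rwa [hnorm, hnorm, ← WithLp.toLp_sub, Prod.mk_sub_mk, sub_self, hnorm, abs_zero,
    Real.zero_rpow (by linarith), add_zero, ← Real.rpow_mul (abs_nonneg _),
    mul_one_div_cancel (by linarith), Real.rpow_one] at this

theorem EuclideanSpace.lipschitzWith_of_dist_apply_le {f : EuclideanSpace ℝ ι → EuclideanSpace ℝ ι}
    {K : ℝ≥0} (h : ∀ x y j, dist (f x j) (f y j) ≤ K * dist (x j) (y j)) : LipschitzWith K f := by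
  refine LipschitzWith.of_dist_le_mul fun x y => ?_
  rw [EuclideanSpace.dist_eq, EuclideanSpace.dist_eq, ← Real.sqrt_sq K.coe_nonneg,
    ← Real.sqrt_mul (sq_nonneg _), Finset.mul_sum]
  gcongr with j
  rw [← mul_pow]
  exact pow_le_pow_left₀ dist_nonneg (h x y j) 2

def lpUnitSphere (ι : Type*) [Fintype ι] (p : ℝ) : Set (EuclideanSpace ℝ ι) :=
  {x | ∑ j, |x j| ^ p = 1}

theorem setOf_rpow_sum_abs_rpow_eq_one {p : ℝ} (hp : p ≠ 0) :
    {x : EuclideanSpace ℝ ι | (∑ j, |x j| ^ p) ^ (1 / p) = 1} = lpUnitSphere ι p := by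
  ext x
  rw [mem_ofPred_eq, one_div, Real.rpow_inv_eq (by positivity) zero_le_one hp, Real.one_rpow]
  rfl

theorem lpUnitSphere_eq_preimage_sphere {p : ℝ} [Fact (1 ≤ ENNReal.ofReal p)] (hp : 0 < p) :
    lpUnitSphere ι p = (WithLp.toLp (ENNReal.ofReal p) ∘ WithLp.ofLp) ⁻¹' Metric.sphere 0 1 := by
  ext x
  have hsum : 0 ≤ ∑ j, |x j| ^ p := by positivity
  simp [lpUnitSphere, PiLp.norm_eq_sum (ENNReal.toReal_ofReal hp.le ▸ hp),
    ENNReal.toReal_ofReal hp.le, Real.rpow_inv_eq hsum zero_le_one hp.ne']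

theorem hausdorffMeasure_lpUnitSphere_eq_zero {p : ℝ} (hp : 1 ≤ p) :
    μH[Fintype.card ι] (lpUnitSphere ι p) = 0 := by
  have : Fact (1 ≤ ENNReal.ofReal p) := ⟨ENNReal.one_le_ofReal.mpr hp⟩
  let L : EuclideanSpace ℝ ι ≃L[ℝ] PiLp (ENNReal.ofReal p) (fun _ : ι => ℝ) :=
    ((WithLp.linearEquiv 2 ℝ (ι → ℝ)).trans
      (WithLp.linearEquiv (ENNReal.ofReal p) ℝ (ι → ℝ)).symm).toContinuousLinearEquiv
  have : (μH[Fintype.card ι] : Measure (EuclideanSpace ℝ ι)).IsAddHaarMeasure := by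
    simpa using isAddHaarMeasure_hausdorffMeasure (E := EuclideanSpace ℝ ι)
  rw [lpUnitSphere_eq_preimage_sphere (by linarith)]
  change μH[_] (L ⁻¹' _) = 0
  rw [← Measure.map_apply L.continuous.measurable Metric.isClosed_sphere.measurableSet]
  exact Measure.addHaar_sphere_of_ne_zero _ _ one_ne_zero

theorem hausdorffMeasure_lpUnitSphere_inter_coord_eq_zero {p : ℝ} (hp : 1 ≤ p) (i : ι) :
    μH[(Fintype.card ι - 1 : ℕ)] (lpUnitSphere ι p ∩ {x | x i = 0}) = 0 := by
  classical
  let emb : EuclideanSpace ℝ {j // j ≠ i} → EuclideanSpace ℝ ι :=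
    fun z => WithLp.toLp 2 fun j => if h : j = i then 0 else z ⟨j, h⟩
  have hsplit : ∀ f : ι → ℝ, ∑ j, f j = f i + ∑ j : {j // j ≠ i}, f j :=
    fun f => Fintype.sum_eq_add_sum_subtype_ne f i
  have hemb : Isometry emb := Isometry.of_dist_eq fun z w => by
    simp [EuclideanSpace.dist_eq, emb, hsplit (fun j => dist _ _ ^ 2), fun j : {j // j ≠ i} => j.2]
  have hsub : lpUnitSphere ι p ∩ {x | x i = 0} ⊆ emb '' lpUnitSphere {j // j ≠ i} p := by
    rintro x ⟨hS, hx : x i = 0⟩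
    refine ⟨WithLp.toLp 2 fun j => x j, ?_, ?_⟩
    · simpa [lpUnitSphere, hsplit (fun j => |x j| ^ p), hx, Real.zero_rpow (by linarith : p ≠ 0)]
        using hS
    · ext j
      by_cases h : j = i
      · subst h; simp [emb, hx]
      · simp [emb, h]
  refine measure_mono_null hsub ?_
  rw [hemb.hausdorffMeasure_image (Or.inl (Nat.cast_nonneg _))]
  simpa using hausdorffMeasure_lpUnitSphere_eq_zero (ι := {j // j ≠ i}) hp

theorem hausdorffMeasure_lpUnitSphere_inter_le_neg (p c d : ℝ) (i : ι) :
    μH[d] (lpUnitSphere ι p ∩ {x | x i ≤ -c}) = μH[d] (lpUnitSphere ι p ∩ {x | c ≤ x i}) := by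
  classical
  let σ : EuclideanSpace ℝ ι ≃ₗᵢ[ℝ] EuclideanSpace ℝ ι := LinearIsometryEquiv.piLpCongrRight 2
    fun j => if j = i then LinearIsometryEquiv.neg ℝ else LinearIsometryEquiv.refl ℝ ℝ
  have hσ : ∀ x j, σ x j = if j = i then -x j else x j := fun x j => by
    by_cases h : j = i <;> simp [σ, h]
  have hpre : σ ⁻¹' (lpUnitSphere ι p ∩ {x | c ≤ x i}) = lpUnitSphere ι p ∩ {x | x i ≤ -c} := by
    ext x
    have habs : ∀ j, |σ x j| = |x j| := fun j => by rw [hσ]; split_ifs <;> simp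
    simp only [lpUnitSphere, mem_preimage, mem_inter_iff, mem_ofPred_eq, habs]
    rw [hσ, if_pos rfl]
    constructor <;> rintro ⟨h1, h2⟩ <;> exact ⟨h1, by linarith⟩
  rw [← hpre]
  exact σ.toIsometryEquiv.hausdorffMeasure_preimage d _

theorem hausdorffMeasure_lpUnitSphere_inter_abs_le (p r d : ℝ) (i : ι) :
    μH[d] (lpUnitSphere ι p ∩ {x | r ≤ |x i|}) ≤ 2 * μH[d] (lpUnitSphere ι p ∩ {x | r ≤ x i}) :=
  calc μH[d] (lpUnitSphere ι p ∩ {x | r ≤ |x i|})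
      ≤ μH[d] (lpUnitSphere ι p ∩ {x | r ≤ x i} ∪ lpUnitSphere ι p ∩ {x | x i ≤ -r}) := by
        refine measure_mono fun x ⟨hS, (hx : r ≤ |x i|)⟩ => ?_
        rcases le_abs'.mp hx with h | h
        · exact Or.inr ⟨hS, h⟩
        · exact Or.inl ⟨hS, h⟩
    _ ≤ μH[d] (lpUnitSphere ι p ∩ {x | r ≤ x i}) + μH[d] (lpUnitSphere ι p ∩ {x | x i ≤ -r}) :=
        measure_union_le _ _
    _ = 2 * μH[d] (lpUnitSphere ι p ∩ {x | r ≤ x i}) := by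
        rw [hausdorffMeasure_lpUnitSphere_inter_le_neg, two_mul]

theorem two_mul_hausdorffMeasure_lpUnitSphere_inter_nonneg_le {p d : ℝ} {i : ι}
    (h : μH[d] (lpUnitSphere ι p ∩ {x | x i = 0}) = 0) :
    2 * μH[d] (lpUnitSphere ι p ∩ {x | 0 ≤ x i}) ≤ μH[d] (lpUnitSphere ι p) := by
  set S := lpUnitSphere ι p
  have hmeas : MeasurableSet {x : EuclideanSpace ℝ ι | 0 ≤ x i} :=
    measurableSet_le measurable_const (by fun_prop)
  have hneg : μH[d] (S ∩ {x | x i ≤ -0}) ≤ μH[d] (S \ {x | 0 ≤ x i}) := by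
    calc μH[d] (S ∩ {x | x i ≤ -0})
        ≤ μH[d] (S \ {x | 0 ≤ x i} ∪ S ∩ {x | x i = 0}) := by
          refine measure_mono fun x ⟨hS, (hx : x i ≤ -0)⟩ => ?_
          rcases (hx.trans_eq neg_zero).lt_or_eq with h | h
          · exact Or.inl ⟨hS, not_le.mpr h⟩
          · exact Or.inr ⟨hS, h⟩
      _ ≤ μH[d] (S \ {x | 0 ≤ x i}) := (measure_union_le _ _).trans_eq (by rw [h, add_zero])
  calc 2 * μH[d] (S ∩ {x | 0 ≤ x i})
      = μH[d] (S ∩ {x | 0 ≤ x i}) + μH[d] (S ∩ {x | x i ≤ -0}) := by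
        rw [two_mul, hausdorffMeasure_lpUnitSphere_inter_le_neg]
    _ ≤ μH[d] S := by
        rw [← measure_inter_add_sdiff S hmeas]
        gcongr

noncomputable def lpSphereCapMap [DecidableEq ι] (p t r : ℝ) (i : ι) (y : EuclideanSpace ℝ ι) :
    EuclideanSpace ℝ ι :=
  WithLp.toLp 2 fun j => if j = i then (|t * y i| ^ p + |r| ^ p) ^ (1 / p) else t * y j

theorem lipschitzWith_lpSphereCapMap [DecidableEq ι] {p t : ℝ} (hp : 1 ≤ p) (ht : 0 ≤ t)
    (r : ℝ) (i : ι) : LipschitzWith (Real.toNNReal t) (lpSphereCapMap p t r i) := by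
  refine EuclideanSpace.lipschitzWith_of_dist_apply_le fun x y j => ?_
  rw [Real.coe_toNNReal t ht, Real.dist_eq, Real.dist_eq]
  by_cases hj : j = i
  · subst hj
    simpa [lpSphereCapMap, ← mul_sub, abs_mul, abs_of_nonneg ht] using
      abs_rpow_add_rpow_one_div_sub_le hp (t * x j) (t * y j) r
  · simp [lpSphereCapMap, hj, ← mul_sub, abs_mul, abs_of_nonneg ht]

theorem lpUnitSphere_inter_le_subset_image_lpSphereCapMap [DecidableEq ι] {p t r : ℝ} (hp : 0 < p)
    (ht : 0 ≤ t) (hr : 0 ≤ r) (htr : t ^ p + r ^ p = 1) (i : ι) :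
    lpUnitSphere ι p ∩ {x | r ≤ x i} ⊆
      lpSphereCapMap p t r i '' (lpUnitSphere ι p ∩ {y | 0 ≤ y i}) := by
  rintro x ⟨hS, hxr : r ≤ x i⟩
  have hx0 : 0 ≤ x i := hr.trans hxr
  have hsplit : x i ^ p + ∑ j : {j // j ≠ i}, |x j| ^ p = 1 := by
    rw [← abs_of_nonneg hx0, ← hS]
    exact (Fintype.sum_eq_add_sum_subtype_ne (fun j => |x j| ^ p) i).symm
  have hrest : 0 ≤ ∑ j : {j // j ≠ i}, |x j| ^ p := by positivity
  have hrx : r ^ p ≤ x i ^ p := Real.rpow_le_rpow hr hxr hp.le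
  rcases ht.eq_or_lt with rfl | htpos
  · -- the cap degenerates to the point `r • eᵢ`, which `x` itself is mapped to
    rw [Real.zero_rpow hp.ne', zero_add] at htr
    have hxi : x i = r := (Real.rpow_left_inj hx0 hr hp.ne').mp (by linarith)
    have hrest0 : ∑ j : {j // j ≠ i}, |x j| ^ p = 0 := by rw [hxi, htr] at hsplit; linarith
    have hzero : ∀ j : {j // j ≠ i}, |x j| ^ p = 0 := fun j =>
      (Finset.sum_eq_zero_iff_of_nonneg fun j _ => Real.rpow_nonneg (abs_nonneg _) p).mp hrest0 j
        (Finset.mem_univ j)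
    refine ⟨x, ⟨hS, hx0⟩, ?_⟩
    ext j
    by_cases hj : j = i
    · subst hj
      simp [lpSphereCapMap, Real.zero_rpow hp.ne', abs_of_nonneg hr, hxi,
        Real.rpow_rpow_inv hr hp.ne']
    · simp [lpSphereCapMap, hj,
        abs_eq_zero.mp ((Real.rpow_eq_zero (abs_nonneg _) hp.ne').mp (hzero ⟨j, hj⟩))]
  · have hw : ((x i ^ p - r ^ p) ^ (1 / p)) ^ p = x i ^ p - r ^ p := by
      rw [one_div, Real.rpow_inv_rpow (by linarith) hp.ne']
    set w := (x i ^ p - r ^ p) ^ (1 / p)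
    have hw0 : 0 ≤ w := by positivity
    refine ⟨WithLp.toLp 2 fun j => if j = i then w / t else x j / t, ⟨?_, ?_⟩, ?_⟩
    · have hdiv : ∀ a : ℝ, |a / t| ^ p = |a| ^ p / t ^ p := fun a => by
        rw [abs_div, abs_of_pos htpos, Real.div_rpow (abs_nonneg a) htpos.le]
      simp only [lpUnitSphere, mem_ofPred_eq]
      rw [Fintype.sum_eq_add_sum_subtype_ne _ i]
      simp only [if_pos, fun j : {j // j ≠ i} => j.2, if_false, hdiv]
      rw [← Finset.sum_div, ← add_div, abs_of_nonneg hw0, hw, div_eq_one_iff_eq (by positivity)]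
      linarith
    · simp only [mem_ofPred_eq, if_pos]
      positivity
    · ext j
      by_cases hj : j = i
      · subst hj
        simp [lpSphereCapMap, mul_div_cancel₀ _ htpos.ne', abs_of_nonneg hw0, hw,
          abs_of_nonneg hr, Real.rpow_rpow_inv hx0 hp.ne']
      · simp [lpSphereCapMap, hj, mul_div_cancel₀ _ htpos.ne']

theorem hausdorffMeasure_lpUnitSphere_inter_ge_le {p r d : ℝ} (hp : 1 ≤ p) (hr0 : 0 ≤ r)
    (hr1 : r ≤ 1) (hd : 0 ≤ d) (i : ι) :
    μH[d] (lpUnitSphere ι p ∩ {x | r ≤ x i}) ≤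
      ENNReal.ofReal ((1 - r ^ p) ^ (d / p)) * μH[d] (lpUnitSphere ι p ∩ {x | 0 ≤ x i}) := by
  classical
  have hrp : r ^ p ≤ 1 := Real.rpow_le_one hr0 hr1 (by linarith)
  set t := (1 - r ^ p) ^ (1 / p)
  have ht0 : 0 ≤ t := by positivity
  have htr : t ^ p + r ^ p = 1 := by
    rw [← Real.rpow_mul (by linarith), one_div_mul_cancel (by linarith), Real.rpow_one]
    ring
  calc μH[d] (lpUnitSphere ι p ∩ {x | r ≤ x i})
      ≤ μH[d] (lpSphereCapMap p t r i '' (lpUnitSphere ι p ∩ {y | 0 ≤ y i})) :=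
        measure_mono (lpUnitSphere_inter_le_subset_image_lpSphereCapMap (by linarith) ht0 hr0 htr i)
    _ ≤ ENNReal.ofReal t ^ d * μH[d] (lpUnitSphere ι p ∩ {y | 0 ≤ y i}) :=
        (lipschitzWith_lpSphereCapMap hp ht0 r i).hausdorffMeasure_image_le hd _
    _ = ENNReal.ofReal ((1 - r ^ p) ^ (d / p)) * μH[d] (lpUnitSphere ι p ∩ {x | 0 ≤ x i}) := by
        rw [ENNReal.ofReal_rpow_of_nonneg ht0 hd, ← Real.rpow_mul (by linarith), one_div_mul_eq_div]

theorem stmt_0 (k : ℕ) (hk : 2 ≤ k) (p r : ℝ) (hp : 1 ≤ p) (hr0 : 0 ≤ r) (hr1 : r ≤ 1) :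
    (μH[(k : ℝ) - 1] {x : EuclideanSpace ℝ (Fin k) |
        (∑ i, |x i| ^ p) ^ (1 / p) = 1 ∧ r ≤ |x ⟨0, by omega⟩|}) ≤
      ENNReal.ofReal ((1 - r ^ p) ^ (((k : ℝ) - 1) / p)) *
        μH[(k : ℝ) - 1] {x : EuclideanSpace ℝ (Fin k) | (∑ i, |x i| ^ p) ^ (1 / p) = 1} := by
  have hd : (k : ℝ) - 1 = ((Fintype.card (Fin k) - 1 : ℕ) : ℝ) := by
    simp [Nat.cast_sub (by omega : 1 ≤ k)]
  rw [ofPred_and, setOf_rpow_sum_abs_rpow_eq_one (by positivity : p ≠ 0), hd]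
  set i : Fin k := ⟨0, by omega⟩
  set d : ℝ := ((Fintype.card (Fin k) - 1 : ℕ) : ℝ)
  calc μH[d] (lpUnitSphere (Fin k) p ∩ {x | r ≤ |x i|})
      ≤ 2 * μH[d] (lpUnitSphere (Fin k) p ∩ {x | r ≤ x i}) :=
        hausdorffMeasure_lpUnitSphere_inter_abs_le p r d i
    _ ≤ 2 * (ENNReal.ofReal ((1 - r ^ p) ^ (d / p)) *
          μH[d] (lpUnitSphere (Fin k) p ∩ {x | 0 ≤ x i})) := by
        gcongr
        exact hausdorffMeasure_lpUnitSphere_inter_ge_le hp hr0 hr1 (Nat.cast_nonneg _) i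
    _ = ENNReal.ofReal ((1 - r ^ p) ^ (d / p)) *
          (2 * μH[d] (lpUnitSphere (Fin k) p ∩ {x | 0 ≤ x i})) := mul_left_comm _ _ _
    _ ≤ ENNReal.ofReal ((1 - r ^ p) ^ (d / p)) * μH[d] (lpUnitSphere (Fin k) p) := by
        gcongr
        exact two_mul_hausdorffMeasure_lpUnitSphere_inter_nonneg_le
          (hausdorffMeasure_lpUnitSphere_inter_coord_eq_zero hp i)
end

section
/- For all p ≥ 2, 1/p ≤ 1/Γ(1/p) ≤ 1.2/p, where Γ is the Gamma function. -/
/-!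
With `x = 1 / p ∈ (0, 1/2]` we have `Γ(x) = p Γ(1 + x)`, so it suffices that `5/6 ≤ Γ ≤ 1` on
`[1, 3/2]`. The upper bound is convexity of `Γ` between `Γ(1) = Γ(2) = 1`. For the lower bound
(the true minimum is `≈ 0.8856`), a convex function lies above each secant line outside the chord's
interval; secants through the points `1, 5/4, 3/2, 2` cover `[1, 3/2]` in three pieces, using
`Γ(3/2) = √π/2` and a lower bound on `Γ(5/4)` from the reflection formula.
-/

open Real Set

namespace ConvexOn

variable {s : Set ℝ} {f : ℝ → ℝ} {a b t : ℝ}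

theorem le_secant (hf : ConvexOn ℝ s f) (ha : a ∈ s) (hb : b ∈ s) (hat : a ≤ t) (htb : t ≤ b) :
    f t ≤ f a + (f b - f a) / (b - a) * (t - a) := by
  rcases hat.eq_or_lt with rfl | hat
  · simp
  have hts : t ∈ s := hf.1.ordConnected.out ha hb ⟨hat.le, htb⟩
  have h := hf.secant_mono ha hts hb hat.ne' (hat.trans_le htb).ne' htb
  rw [div_le_iff₀ (sub_pos.2 hat)] at h
  linarith

theorem secant_le_of_le_left (hf : ConvexOn ℝ s f) (ht : t ∈ s) (ha : a ∈ s) (hb : b ∈ s)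
    (hta : t ≤ a) (hab : a < b) : f a + (f b - f a) / (b - a) * (t - a) ≤ f t := by
  rcases hta.eq_or_lt with rfl | hta
  · simp
  have h := hf.secant_mono ha ht hb hta.ne hab.ne' (hta.trans hab).le
  rw [div_le_iff_of_neg (sub_neg.2 hta)] at h
  linarith

theorem secant_le_of_right_le (hf : ConvexOn ℝ s f) (ha : a ∈ s) (hb : b ∈ s) (ht : t ∈ s)
    (hab : a < b) (hbt : b ≤ t) : f a + (f b - f a) / (b - a) * (t - a) ≤ f t := by
  have h := hf.secant_mono ha hb ht hab.ne' (hab.trans_le hbt).ne' hbt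
  rw [le_div_iff₀ (sub_pos.2 (hab.trans_le hbt))] at h
  linarith

end ConvexOn

namespace Real

theorem Gamma_le_one_of_mem_Icc {t : ℝ} (ht : t ∈ Icc 1 2) : Gamma t ≤ 1 := by
  have h := convexOn_Gamma.le_on_segment (mem_Ioi.2 one_pos) (mem_Ioi.2 two_pos)
    (by rwa [segment_eq_Icc (one_le_two (α := ℝ))])
  rwa [Gamma_one, Gamma_two, max_self] at h

theorem Gamma_three_div_two : Gamma (3 / 2) = √π / 2 := by
  rw [show (3 / 2 : ℝ) = 1 / 2 + 1 by norm_num, Gamma_add_one (by norm_num), Gamma_one_half_eq]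
  ring

theorem Gamma_one_add_mul_Gamma_two_sub {x : ℝ} (hx₀ : x ≠ 0) (hx₁ : x ≠ 1) :
    Gamma (1 + x) * Gamma (2 - x) = x * (1 - x) * π / sin (π * x) := by
  rw [add_comm, Gamma_add_one hx₀, show 2 - x = (1 - x) + 1 by ring,
    Gamma_add_one (sub_ne_zero.2 hx₁.symm)]
  calc x * Gamma x * ((1 - x) * Gamma (1 - x)) = x * (1 - x) * (Gamma x * Gamma (1 - x)) := by
        ring
    _ = _ := by rw [Gamma_mul_Gamma_one_sub, mul_div_assoc]

theorem sqrt_pi_mem_Ioo : √π ∈ Ioo 1.772 1.775 := by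
  constructor
  · rw [lt_sqrt (by norm_num)]; linarith [pi_gt_d2]
  · rw [sqrt_lt' (by norm_num)]; linarith [pi_lt_d2]

theorem seven_div_eight_lt_Gamma_five_div_four : 7 / 8 < Gamma (5 / 4) := by
  have hprod := Gamma_one_add_mul_Gamma_two_sub (x := 1 / 4) (by norm_num) (by norm_num)
  rw [show π * (1 / 4) = π / 4 by ring, sin_pi_div_four] at hprod
  norm_num at hprod
  have h74 : Gamma (7 / 4) ≤ (√π + 2) / 4 := by
    have h := convexOn_Gamma.le_secant (a := 3 / 2) (b := 2) (t := 7 / 4)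
      (mem_Ioi.2 (by norm_num)) (mem_Ioi.2 (by norm_num)) (by norm_num) (by norm_num)
    rw [Gamma_three_div_two, Gamma_two] at h
    norm_num at h
    linarith
  -- `Γ(5/4) Γ(7/4) = 3π√2/16 ≈ 0.833` while `Γ(7/4) ≤ (√π + 2)/4 ≈ 0.943`
  have hprod' : 8 * √2 * (Gamma (5 / 4) * Gamma (7 / 4)) = 3 * π := by
    rw [hprod]; field_simp; norm_num
  obtain ⟨-, hπ⟩ := sqrt_pi_mem_Ioo
  have h2 : √2 < 1.415 := by rw [sqrt_lt' (by norm_num)]; norm_num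
  have h74pos := Gamma_pos_of_pos (show (0 : ℝ) < 7 / 4 by norm_num)
  by_contra! h54
  nlinarith [pi_gt_d2, sqrt_nonneg 2, mul_le_mul h54 h74 h74pos.le (by norm_num)]

theorem five_div_six_le_Gamma {t : ℝ} (ht : t ∈ Icc 1 (3 / 2)) : 5 / 6 ≤ Gamma t := by
  obtain ⟨ht₁, ht₂⟩ := ht
  have hg := seven_div_eight_lt_Gamma_five_div_four
  obtain ⟨hπ₁, hπ₂⟩ := sqrt_pi_mem_Ioo
  rcases le_total t (5 / 4) with ht₃ | ht₃
  · have h := convexOn_Gamma.secant_le_of_le_left (a := 5 / 4) (b := 3 / 2) (mem_Ioi.2 (by linarith))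
      (mem_Ioi.2 (by norm_num)) (mem_Ioi.2 (by norm_num)) ht₃ (by norm_num)
    rw [Gamma_three_div_two] at h
    norm_num at h
    nlinarith
  rcases le_total t (13 / 10) with ht₄ | ht₄
  · have h := convexOn_Gamma.secant_le_of_right_le (a := 1) (b := 5 / 4) (mem_Ioi.2 one_pos)
      (mem_Ioi.2 (by norm_num)) (mem_Ioi.2 (by linarith)) (by norm_num) ht₃
    rw [Gamma_one] at h
    norm_num at h
    nlinarith
  · have h := convexOn_Gamma.secant_le_of_le_left (a := 3 / 2) (b := 2) (mem_Ioi.2 (by linarith))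
      (mem_Ioi.2 (by norm_num)) (mem_Ioi.2 (by norm_num)) ht₂ (by norm_num)
    rw [Gamma_three_div_two, Gamma_two] at h
    norm_num at h
    nlinarith

end Real

theorem stmt_10 (p : ℝ) (hp : 2 ≤ p) :
    1 / p ≤ 1 / Real.Gamma (1 / p) ∧ 1 / Real.Gamma (1 / p) ≤ 1.2 / p := by
  have hp₀ : 0 < p := by linarith
  have hx₀ : 0 < 1 / p := by positivity
  have hx₁ : 1 / p ≤ 1 / 2 := one_div_le_one_div_of_le two_pos hp
  have hΓ : Real.Gamma (1 / p) = p * Real.Gamma (1 + 1 / p) := by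
    rw [add_comm, Real.Gamma_add_one hx₀.ne']
    field_simp
  have hub := Real.Gamma_le_one_of_mem_Icc (t := 1 + 1 / p) ⟨by linarith, by linarith⟩
  have hlb := Real.five_div_six_le_Gamma (t := 1 + 1 / p) ⟨by linarith, by linarith⟩
  rw [hΓ]
  constructor
  · gcongr
    exact mul_le_of_le_one_right hp₀.le hub
  · rw [div_le_div_iff₀ (by positivity) hp₀]
    nlinarith
end

section
/- Let Y be a GGamma(1/(p-1), p/(p-1)) random variable for p ≥ 2, and let μ = E[Y] = 1/Γ(1/p). Then Y is sub-gamma to the right with variance parameter μ and scale parameter 1: for all λ ∈ (0, 1), E[exp(λ(Y - μ))] ≤ exp(λ²μ / (2(1 - λ))). -/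
/-!
Expanding `exp (λ y)` in its power series, the moment generating function of a nonnegative random
variable is `∑ λᵏ E[Yᵏ] / k!`. Under the moment bound `E[Y^(k+1)] ≤ k! μ` the `k`-th term is at
most `λᵏ μ / k ≤ λᵏ μ / 2` for `k ≥ 2`, so `E[exp (λ Y)] ≤ 1 + λμ + λ²μ / (2(1-λ))`, which is at
most `exp (λμ + λ²μ / (2(1-λ)))`. With `a = 1/(p-1)` the law is `GGamma(a, a+1)`, whose moments are
`E[Y^(k+1)] = Γ((a+k+1)/(a+1)) / Γ(a/(a+1))`; the argument of `Γ` lies in `[1, k+1]`, where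
convexity bounds `Γ` by `max (Γ 1) (Γ (k+1)) = k!`.
-/

open MeasureTheory Set

/-- The Generalized Gamma distribution `GGamma(a, b)`, with density
`b * x^(a-1) * exp (-x^b) / Γ(a/b)` on `(0, ∞)`. -/
noncomputable def gGammaMeasure (a b : ℝ) : Measure ℝ :=
  (volume.restrict (Ioi (0:ℝ))).withDensity fun x =>
    ENNReal.ofReal (b * x ^ (a - 1) * Real.exp (-x ^ b) / Real.Gamma (a / b))

open Real Nat
open scoped ENNReal

theorem Gamma_le_factorial_of_mem_Icc {x : ℝ} (k : ℕ) (hx : x ∈ Icc 1 ((k : ℝ) + 1)) :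
    Gamma x ≤ k ! := by
  calc Gamma x ≤ max (Gamma 1) (Gamma (k + 1)) :=
        convexOn_Gamma.le_max_of_mem_Icc (by norm_num) (by simp only [mem_Ioi]; positivity) hx
    _ = k ! := by
        rw [Gamma_one, Gamma_nat_eq_factorial, max_eq_right (mod_cast k.factorial_pos)]

theorem ofReal_exp_eq_tsum {t : ℝ} (ht : 0 ≤ t) :
    ENNReal.ofReal (exp t) = ∑' n : ℕ, ENNReal.ofReal (t ^ n / n !) := by
  rw [← ENNReal.ofReal_tsum_of_nonneg (fun n => by positivity) (summable_pow_div_factorial t),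
    exp_eq_exp_ℝ, NormedSpace.exp_eq_tsum_div]

theorem lintegral_ofReal_exp_mul_eq_tsum {ν : Measure ℝ} (hν : ∀ᵐ y ∂ν, 0 ≤ y) {lam : ℝ}
    (hlam : 0 ≤ lam) :
    ∫⁻ y, ENNReal.ofReal (exp (lam * y)) ∂ν =
      ∑' k : ℕ, ENNReal.ofReal (lam ^ k / k !) * ∫⁻ y, ENNReal.ofReal (y ^ k) ∂ν := by
  calc ∫⁻ y, ENNReal.ofReal (exp (lam * y)) ∂ν
      = ∫⁻ y, ∑' k : ℕ, ENNReal.ofReal (lam ^ k / k !) * ENNReal.ofReal (y ^ k) ∂ν := by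
        refine lintegral_congr_ae (hν.mono fun y hy => ?_)
        dsimp only
        rw [ofReal_exp_eq_tsum (mul_nonneg hlam hy)]
        refine tsum_congr fun k => ?_
        rw [← ENNReal.ofReal_mul (by positivity), mul_pow, div_mul_eq_mul_div]
    _ = _ := by
        rw [lintegral_tsum fun k => by fun_prop]
        simp_rw [lintegral_const_mul' _ _ ENNReal.ofReal_ne_top]

theorem pow_div_factorial_mul_le {lam μ : ℝ} (h0 : 0 ≤ lam) (hμ : 0 ≤ μ) (k : ℕ) :
    lam ^ (k + 2) / (k + 2) ! * ((k + 1) ! * μ) ≤ lam ^ 2 * μ / 2 * lam ^ k := by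
  have hfac : ((k + 2) ! : ℝ) = (k + 2) * (k + 1) ! := by push_cast [factorial_succ]; ring
  rw [hfac, div_mul_eq_mul_div, div_le_iff₀ (by positivity)]
  have : 0 ≤ lam ^ (k + 2) * μ * (k + 1) ! := by positivity
  calc lam ^ (k + 2) * ((k + 1) ! * μ) = lam ^ (k + 2) * μ * (k + 1) ! := by ring
    _ ≤ lam ^ (k + 2) * μ * (k + 1) ! * ((k + 2) / 2) := by
        apply le_mul_of_one_le_right this; linarith [(k.cast_nonneg : (0 : ℝ) ≤ k)]
    _ = lam ^ 2 * μ / 2 * lam ^ k * ((k + 2) * (k + 1) !) := by ring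

theorem lintegral_ofReal_exp_mul_le_of_moment_le {ν : Measure ℝ} [IsProbabilityMeasure ν]
    (hν : ∀ᵐ y ∂ν, 0 ≤ y) {μ lam : ℝ} (hμ : 0 ≤ μ)
    (hmom : ∀ k : ℕ, ∫⁻ y, ENNReal.ofReal (y ^ (k + 1)) ∂ν ≤ ENNReal.ofReal (k ! * μ))
    (h0 : 0 ≤ lam) (h1 : lam < 1) :
    ∫⁻ y, ENNReal.ofReal (exp (lam * y)) ∂ν ≤
      ENNReal.ofReal (1 + lam * μ + lam ^ 2 * μ / (2 * (1 - lam))) := by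
  have hmean : ENNReal.ofReal (lam ^ 1 / 1 !) * ∫⁻ y, ENNReal.ofReal (y ^ 1) ∂ν ≤
      ENNReal.ofReal (lam * μ) := by
    calc _ ≤ ENNReal.ofReal lam * ENNReal.ofReal (0 ! * μ) := by
          simpa using mul_le_mul_right (hmom 0) (ENNReal.ofReal lam)
      _ = ENNReal.ofReal (lam * μ) := by simp [ENNReal.ofReal_mul h0]
  have htail : ∑' k : ℕ, ENNReal.ofReal (lam ^ (k + 2) / (k + 2) !) *
      ∫⁻ y, ENNReal.ofReal (y ^ (k + 2)) ∂ν ≤ ENNReal.ofReal (lam ^ 2 * μ / (2 * (1 - lam))) := by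
    calc _ ≤ ∑' k : ℕ, ENNReal.ofReal (lam ^ 2 * μ / 2 * lam ^ k) := by
          refine ENNReal.tsum_le_tsum fun k => ?_
          calc _ ≤ ENNReal.ofReal (lam ^ (k + 2) / (k + 2) !) * ENNReal.ofReal ((k + 1) ! * μ) := by
                gcongr; exact hmom (k + 1)
            _ ≤ _ := by
                rw [← ENNReal.ofReal_mul (by positivity)]
                exact ENNReal.ofReal_le_ofReal (pow_div_factorial_mul_le h0 hμ k)
      _ = ENNReal.ofReal (lam ^ 2 * μ / (2 * (1 - lam))) := by
          rw [← ENNReal.ofReal_tsum_of_nonneg (fun k => by positivity)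
            ((summable_geometric_of_lt_one h0 h1).mul_left _), tsum_mul_left,
            tsum_geometric_of_lt_one h0 h1]
          congr 1
          field_simp
  calc ∫⁻ y, ENNReal.ofReal (exp (lam * y)) ∂ν
      = ∫⁻ y, ENNReal.ofReal (y ^ 0) ∂ν + (ENNReal.ofReal (lam ^ 1 / 1 !) *
          ∫⁻ y, ENNReal.ofReal (y ^ 1) ∂ν + ∑' k : ℕ, ENNReal.ofReal (lam ^ (k + 2) / (k + 2) !) *
          ∫⁻ y, ENNReal.ofReal (y ^ (k + 2)) ∂ν) := by
        rw [lintegral_ofReal_exp_mul_eq_tsum hν h0, tsum_eq_zero_add' ENNReal.summable,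
          tsum_eq_zero_add' ENNReal.summable]
        simp
    _ ≤ 1 + (ENNReal.ofReal (lam * μ) + ENNReal.ofReal (lam ^ 2 * μ / (2 * (1 - lam)))) :=
        add_le_add (by simp) (add_le_add hmean htail)
    _ = _ := by
        rw [ENNReal.ofReal_add (by positivity) (by positivity),
          ENNReal.ofReal_add zero_le_one (by positivity), ENNReal.ofReal_one, add_assoc]

theorem integral_exp_mul_sub_le_of_moment_le {ν : Measure ℝ} [IsProbabilityMeasure ν]
    (hν : ∀ᵐ y ∂ν, 0 ≤ y) {μ lam : ℝ} (hμ : 0 ≤ μ)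
    (hmom : ∀ k : ℕ, ∫⁻ y, ENNReal.ofReal (y ^ (k + 1)) ∂ν ≤ ENNReal.ofReal (k ! * μ))
    (h0 : 0 ≤ lam) (h1 : lam < 1) :
    ∫ y, exp (lam * (y - μ)) ∂ν ≤ exp (lam ^ 2 * μ / (2 * (1 - lam))) := by
  set c := lam ^ 2 * μ / (2 * (1 - lam))
  have hmgf : ∫ y, exp (lam * y) ∂ν ≤ 1 + lam * μ + c := by
    rw [integral_eq_lintegral_of_nonneg_ae (ae_of_all _ fun y => (exp_pos _).le)
      (by fun_prop)]
    exact ENNReal.toReal_le_of_le_ofReal (by positivity)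
      (lintegral_ofReal_exp_mul_le_of_moment_le hν hμ hmom h0 h1)
  calc ∫ y, exp (lam * (y - μ)) ∂ν = ∫ y, exp (-(lam * μ)) * exp (lam * y) ∂ν := by
        congr 1 with y
        rw [← exp_add]
        ring_nf
    _ = exp (-(lam * μ)) * ∫ y, exp (lam * y) ∂ν := integral_const_mul _ _
    _ ≤ exp (-(lam * μ)) * exp (lam * μ + c) := by
        gcongr
        linarith [add_one_le_exp (lam * μ + c)]
    _ = exp c := by rw [← exp_add]; ring_nf

theorem gGammaMeasure_ae_pos (a b : ℝ) : ∀ᵐ y ∂gGammaMeasure a b, 0 < y :=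
  (withDensity_absolutelyContinuous _ _).ae_le (ae_restrict_mem measurableSet_Ioi)

theorem lintegral_rpow_gGammaMeasure {a b r : ℝ} (ha : 0 < a) (hb : 0 < b) (hr : 0 < a + r) :
    ∫⁻ y, ENNReal.ofReal (y ^ r) ∂gGammaMeasure a b =
      ENNReal.ofReal (Gamma ((a + r) / b) / Gamma (a / b)) := by
  have hG : 0 < Gamma (a / b) := Gamma_pos_of_pos (by positivity)
  have hint : IntegrableOn (fun x : ℝ => x ^ (a + r - 1) * exp (-x ^ b)) (Ioi 0) :=
    integrableOn_rpow_mul_exp_neg_rpow (by linarith) hb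
  rw [gGammaMeasure, lintegral_withDensity_eq_lintegral_mul _ (by fun_prop) (by fun_prop)]
  calc _ = ∫⁻ x in Ioi 0,
        ENNReal.ofReal (b / Gamma (a / b) * (x ^ (a + r - 1) * exp (-x ^ b))) := by
        refine setLIntegral_congr_fun measurableSet_Ioi fun x (hx : 0 < x) => ?_
        rw [Pi.mul_apply, ← ENNReal.ofReal_mul (by positivity),
          show a + r - 1 = (a - 1) + r by ring, rpow_add hx]
        congr 1
        ring
    _ = ENNReal.ofReal (Gamma ((a + r) / b) / Gamma (a / b)) := by
        rw [← ofReal_integral_eq_lintegral_ofReal (hint.const_mul _)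
          (ae_restrict_of_forall_mem measurableSet_Ioi fun x (hx : 0 < x) => by positivity),
          integral_const_mul, integral_rpow_mul_exp_neg_rpow hb (by linarith), sub_add_cancel]
        congr 1
        field_simp

theorem isProbabilityMeasure_gGammaMeasure {a b : ℝ} (ha : 0 < a) (hb : 0 < b) :
    IsProbabilityMeasure (gGammaMeasure a b) := by
  constructor
  simpa [(Gamma_pos_of_pos (div_pos ha hb)).ne'] using
    lintegral_rpow_gGammaMeasure ha hb (r := 0) (by simpa using ha)

theorem lintegral_pow_succ_gGammaMeasure_le {a : ℝ} (ha : 0 < a) (k : ℕ) :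
    ∫⁻ y, ENNReal.ofReal (y ^ (k + 1)) ∂gGammaMeasure a (a + 1) ≤
      ENNReal.ofReal (k ! * (1 / Gamma (a / (a + 1)))) := by
  have hG : 0 < Gamma (a / (a + 1)) := Gamma_pos_of_pos (by positivity)
  simp_rw [← rpow_natCast]
  rw [lintegral_rpow_gGammaMeasure ha (by positivity) (by positivity), mul_one_div]
  refine ENNReal.ofReal_le_ofReal (div_le_div_of_nonneg_right ?_ hG.le)
  have hk : (0 : ℝ) ≤ k := k.cast_nonneg
  refine Gamma_le_factorial_of_mem_Icc k ⟨?_, ?_⟩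
  · rw [le_div_iff₀ (by positivity)]; push_cast; linarith
  · rw [div_le_iff₀ (by positivity)]; push_cast; nlinarith

theorem stmt_11 (p : ℝ) (hp : 2 ≤ p) (lam : ℝ) (h0 : 0 < lam) (h1 : lam < 1) :
    ∫ y, Real.exp (lam * (y - 1 / Real.Gamma (1 / p)))
        ∂(gGammaMeasure (1 / (p - 1)) (p / (p - 1))) ≤
      Real.exp (lam ^ 2 * (1 / Real.Gamma (1 / p)) / (2 * (1 - lam))) := by
  have hp1 : 0 < p - 1 := by linarith
  set a := 1 / (p - 1) with ha_def
  have ha : 0 < a := by positivity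
  have hb : p / (p - 1) = a + 1 := by rw [ha_def]; field_simp; ring
  have hab : 1 / p = a / (a + 1) := by rw [← hb, ha_def]; field_simp
  rw [hb, hab]
  have := isProbabilityMeasure_gGammaMeasure ha (by positivity : 0 < a + 1)
  exact integral_exp_mul_sub_le_of_moment_le
    ((gGammaMeasure_ae_pos a (a + 1)).mono fun _ => le_of_lt) (by positivity)
    (lintegral_pow_succ_gGammaMeasure_le ha) h0.le h1
end

section
/- For real x with |x| ≤ √k and an even integer p with 2 ≤ p ≤ √k/2, we have (x + 1)^{p-1} - x^{p-1} ≤ (√k + 1)^{p-1} - (√k)^{p-1} ≤ 2 k^{p/2 - 1} p. -/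
theorem stmt_13 (k x : ℝ) (p : ℕ) (hk : 1 ≤ k) (hpe : Even p)
    (hp2 : 2 ≤ (p : ℝ)) (hpk : (p : ℝ) ≤ Real.sqrt k / 2) (hx : |x| ≤ Real.sqrt k) :
    (x + 1) ^ (p - 1) - x ^ (p - 1) ≤
      (Real.sqrt k + 1) ^ (p - 1) - (Real.sqrt k) ^ (p - 1) ∧
    (Real.sqrt k + 1) ^ (p - 1) - (Real.sqrt k) ^ (p - 1) ≤
      2 * k ^ ((p : ℝ) / 2 - 1) * p := by
  have hk0 : (0:ℝ) ≤ k := by linarith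
  set s := Real.sqrt k with hs
  have hs0 : 0 ≤ s := Real.sqrt_nonneg k
  have hsq : s ^ 2 = k := Real.sq_sqrt hk0
  have hs1 : 1 ≤ s := by nlinarith
  have hp2' : 2 ≤ p := by exact_mod_cast hp2
  have hspos : (0:ℝ) < s := by linarith
  set n := p - 1 with hn
  have expand : ∀ y : ℝ, (y+1)^n - y^n = ∑ i ∈ Finset.range n, y^i * (n.choose i) := by
    intro y
    rw [add_pow, Finset.sum_range_succ]
    simp [Nat.choose_self]
  constructor
  · rw [expand, expand]
    apply Finset.sum_le_sum
    intro i _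
    have hxs : x ^ i ≤ s ^ i := by
      calc x ^ i ≤ |x ^ i| := le_abs_self _
      _ = |x| ^ i := abs_pow x i
      _ ≤ s ^ i := pow_le_pow_left₀ (abs_nonneg x) hx i
    exact mul_le_mul_of_nonneg_right hxs (Nat.cast_nonneg _)
  · have key1 : (s+1)^n - s^n ≤ (n : ℝ) * (s+1)^(n-1) := by
      have hg := geom_sum₂_mul (s+1) s n
      rw [add_sub_cancel_left, mul_one] at hg
      rw [← hg]
      calc (∑ i ∈ Finset.range n, (s+1)^i * s^(n-1-i))
          ≤ ∑ i ∈ Finset.range n, (s+1)^(n-1) := by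
            apply Finset.sum_le_sum
            intro i hi
            have hi' : i < n := Finset.mem_range.mp hi
            have h1 : s ^ (n-1-i) ≤ (s+1) ^ (n-1-i) :=
              pow_le_pow_left₀ hs0 (by linarith) _
            calc (s+1)^i * s^(n-1-i) ≤ (s+1)^i * (s+1)^(n-1-i) := by
                  apply mul_le_mul_of_nonneg_left h1 (by positivity)
              _ = (s+1)^(i + (n-1-i)) := (pow_add _ _ _).symm
              _ = (s+1)^(n-1) := by congr 1; simp only [hn]; omega
        _ = (n : ℝ) * (s+1)^(n-1) := by
            rw [Finset.sum_const, Finset.card_range, nsmul_eq_mul]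
    have key2 : (s+1)^(n-1) ≤ 2 * s^(n-1) := by
      have h1 : s + 1 ≤ s * Real.exp (1/s) := by
        have he := Real.add_one_le_exp (1/s)
        calc s + 1 = s * (1/s + 1) := by field_simp; ring
          _ ≤ s * Real.exp (1/s) := by
              exact mul_le_mul_of_nonneg_left he hs0
      have h2 : (s+1)^(n-1) ≤ (s * Real.exp (1/s))^(n-1) :=
        pow_le_pow_left₀ (by linarith) h1 _
      rw [mul_pow] at h2
      have h3 : Real.exp (1/s) ^ (n-1) = Real.exp ((n-1 : ℕ) * (1/s)) := by
        rw [← Real.exp_nat_mul]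
      have h4 : Real.exp ((n-1 : ℕ) * (1/s)) ≤ 2 := by
        have hle : ((n-1 : ℕ) : ℝ) * (1/s) ≤ 1/2 := by
          have hcast : ((n-1 : ℕ) : ℝ) ≤ (p : ℝ) := by
            exact Nat.cast_le.mpr (by simp only [hn]; omega)
          rw [mul_one_div, div_le_div_iff₀ hspos (by norm_num : (0:ℝ) < 2)]
          nlinarith
        have hmono := Real.exp_le_exp.mpr hle
        have hhalf : Real.exp (1/2 : ℝ) ≤ 2 := by
          have hsq2 : Real.exp (1/2 : ℝ) ^ 2 = Real.exp 1 := by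
            rw [← Real.exp_nat_mul]; norm_num
          nlinarith [Real.exp_pos (1/2 : ℝ), Real.exp_one_lt_d9]
        linarith
      calc (s+1)^(n-1) ≤ s^(n-1) * Real.exp (1/s) ^ (n-1) := h2
        _ ≤ s^(n-1) * 2 := by
            rw [h3]; exact mul_le_mul_of_nonneg_left h4 (by positivity)
        _ = 2 * s^(n-1) := by ring
    have hrpow : k ^ ((p : ℝ) / 2 - 1) = s ^ (n-1) := by
      have h5 : ((p : ℝ) / 2 - 1) = (1/2 : ℝ) * ((p : ℝ) - 2) := by ring
      have hc : ((n - 1 : ℕ) : ℝ) = (p:ℝ) - 2 := by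
        have h6 : n - 1 = p - 2 := by simp only [hn]; omega
        rw [h6, Nat.cast_sub hp2']; norm_num
      rw [h5, Real.rpow_mul hk0, ← Real.sqrt_eq_rpow, ← hc, Real.rpow_natCast]
    rw [hrpow]
    have hnp : (n : ℝ) ≤ (p : ℝ) := Nat.cast_le.mpr (by simp only [hn]; omega)
    calc (s+1)^n - s^n ≤ (n : ℝ) * (s+1)^(n-1) := key1
      _ ≤ (n : ℝ) * (2 * s^(n-1)) := by
          apply mul_le_mul_of_nonneg_left key2 (Nat.cast_nonneg _)
      _ ≤ 2 * s^(n-1) * p := by nlinarith [pow_nonneg hs0 (n-1)]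
end

section
/- Let x ∈ ℝ^k be sampled from the Generalized Gaussian GGauss(p, σ) for p ≥ 1, σ > 0, i.e. with density proportional to exp(-(‖x‖_p/σ)^p). Then the random variable R = (‖x‖_p/σ)^p has the Gamma(k/p) distribution, i.e. density R^{k/p - 1} e^{-R} / Γ(k/p) on (0, ∞). -/
/-!
The sublevel set `{R ≤ t}` of `R = (‖x‖_p / σ)^p` is the `ℓ_p`-ball of radius `σ t^{1/p}`, of
volume `V σ^k t^{k/p}` with `V` the volume of the unit ball. So the image of Lebesgue measure
under `R` has density `V σ^k (k/p) t^{k/p - 1}` on `t ≥ 0`, and since the generalized Gaussian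
density is `exp (-R)`, the image of the unnormalized measure has density proportional to
`t^{k/p - 1} e^{-t}`: it is a multiple of `Gamma(k/p)`, and normalizing removes the multiple.
-/

open MeasureTheory ProbabilityTheory Set
open scoped ENNReal

theorem MeasureTheory.Measure.ext_of_Iic_of_ne_top {α : Type*} [TopologicalSpace α]
    [MeasurableSpace α] [SecondCountableTopology α] [LinearOrder α] [OrderTopology α]
    [BorelSpace α] [NoMinOrder α] (μ ν : Measure α) (hμ : ∀ a, μ (Iic a) ≠ ∞)
    (h : ∀ a, μ (Iic a) = ν (Iic a)) : μ = ν := by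
  have hν : ∀ a, ν (Iic a) ≠ ∞ := fun a => h a ▸ hμ a
  refine μ.ext_of_Ioc' ν
    (fun a b _ => ne_top_of_le_ne_top (hμ b) (measure_mono Ioc_subset_Iic_self)) fun a b hab => ?_
  rw [← Iic_sdiff_Iic, measure_sdiff (Iic_subset_Iic.2 hab.le) nullMeasurableSet_Iic (hμ a),
    measure_sdiff (Iic_subset_Iic.2 hab.le) nullMeasurableSet_Iic (hν a), h a, h b]

theorem MeasureTheory.Measure.map_withDensity_comp {α β : Type*} [MeasurableSpace α]
    [MeasurableSpace β] {μ : Measure α} {f : α → β} {g : β → ℝ≥0∞} (hf : Measurable f)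
    (hg : Measurable g) : (μ.withDensity (g ∘ f)).map f = (μ.map f).withDensity g := by
  ext s hs
  rw [Measure.map_apply hf hs, withDensity_apply _ hs, setLIntegral_map hs hg hf,
    withDensity_apply _ (hf hs)]
  rfl

theorem MeasureTheory.Measure.map_inv_measure_univ_smul {α β : Type*} [MeasurableSpace α]
    [MeasurableSpace β] (μ : Measure α) {f : α → β} (hf : Measurable f) :
    ((μ univ)⁻¹ • μ).map f = ((μ.map f) univ)⁻¹ • μ.map f := by
  rw [Measure.map_smul, Measure.map_apply hf MeasurableSet.univ, preimage_univ]

theorem MeasureTheory.Measure.inv_measure_univ_smul_smul {α : Type*} [MeasurableSpace α]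
    (P : Measure α) [IsProbabilityMeasure P] {c : ℝ≥0∞} (hc₀ : c ≠ 0) (hc : c ≠ ∞) :
    ((c • P) univ)⁻¹ • (c • P) = P := by
  rw [Measure.smul_apply, measure_univ, smul_eq_mul, mul_one, smul_smul,
    ENNReal.inv_mul_cancel hc₀ hc, one_smul]

/-- The density of the measure on `ℝ` with distribution function `t ↦ C * max t 0 ^ a`. -/
noncomputable def rpowDensity (C a : ℝ) : ℝ → ℝ≥0∞ :=
  (Ici 0).indicator fun s => ENNReal.ofReal (C * (a * s ^ (a - 1)))

theorem measurable_rpowDensity (C a : ℝ) : Measurable (rpowDensity C a) :=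
  (by fun_prop : Measurable _).indicator measurableSet_Ici

theorem withDensity_rpowDensity_Iic {C a : ℝ} (hC : 0 ≤ C) (ha : 0 < a) (t : ℝ) :
    volume.withDensity (rpowDensity C a) (Iic t) = ENNReal.ofReal (C * max t 0 ^ a) := by
  rw [withDensity_apply _ measurableSet_Iic, rpowDensity, lintegral_indicator measurableSet_Ici,
    Measure.restrict_restrict measurableSet_Ici, Ici_inter_Iic]
  rcases lt_or_ge t 0 with ht | ht
  · rw [Icc_eq_empty (not_le.2 ht), max_eq_right ht.le, Real.zero_rpow ha.ne',
      Measure.restrict_empty, lintegral_zero_measure, mul_zero, ENNReal.ofReal_zero]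
  have hint : IntervalIntegrable (fun s => C * (a * s ^ (a - 1))) volume 0 t :=
    ((intervalIntegral.intervalIntegrable_rpow' (by linarith)).const_mul a).const_mul C
  rw [← restrict_Ioc_eq_restrict_Icc, ← ofReal_integral_eq_lintegral_ofReal
      ((intervalIntegrable_iff_integrableOn_Ioc_of_le ht).1 hint),
    ← intervalIntegral.integral_of_le ht, intervalIntegral.integral_const_mul,
    intervalIntegral.integral_const_mul, integral_rpow (Or.inl (by linarith)), sub_add_cancel,
    Real.zero_rpow ha.ne', max_eq_left ht, sub_zero, mul_div_cancel₀ _ ha.ne']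
  filter_upwards [ae_restrict_mem measurableSet_Ioc] with s hs
  have := Real.rpow_nonneg hs.1.le (a - 1)
  positivity

theorem rpowDensity_mul_exp_neg {C a : ℝ} (hC : 0 ≤ C) (ha : 0 < a) :
    rpowDensity C a * (fun t => ENNReal.ofReal (Real.exp (-t))) =
      ENNReal.ofReal (C * Real.Gamma (a + 1)) • gammaPDF a 1 := by
  ext t
  rw [Pi.mul_apply, Pi.smul_apply, smul_eq_mul, rpowDensity]
  rcases lt_or_ge t 0 with ht | ht
  · rw [indicator_of_notMem (show t ∉ Ici 0 from not_le.2 ht), gammaPDF_of_neg ht, zero_mul,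
      mul_zero]
  have hΓ : 0 < Real.Gamma a := Real.Gamma_pos_of_pos ha
  have := Real.rpow_nonneg ht (a - 1)
  rw [indicator_of_mem (mem_Ici.2 ht), gammaPDF_of_nonneg ht,
    ← ENNReal.ofReal_mul (by positivity), ← ENNReal.ofReal_mul (by positivity),
    Real.Gamma_add_one ha.ne', Real.one_rpow, one_mul]
  congr 1
  field_simp

/-- The volume of the unit `ℓ_p`-ball in `ℝⁿ`, cf. `MeasureTheory.volume_sum_rpow_le`. -/
noncomputable def lpBallVolume (n : ℕ) (p : ℝ) : ℝ :=
  (2 * Real.Gamma (1 / p + 1)) ^ n / Real.Gamma (n / p + 1)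

theorem lpBallVolume_nonneg {n : ℕ} {p : ℝ} (hp : 0 < p) : 0 ≤ lpBallVolume n p := by
  have := Real.Gamma_pos_of_pos (show 0 < 1 / p + 1 by positivity)
  have := Real.Gamma_pos_of_pos (show 0 < n / p + 1 by positivity)
  unfold lpBallVolume
  positivity

theorem lpBallVolume_mul_Gamma {n : ℕ} {p : ℝ} (hp : 0 < p) :
    lpBallVolume n p * Real.Gamma (n / p + 1) = (2 * Real.Gamma (1 / p + 1)) ^ n :=
  div_mul_cancel₀ _ (Real.Gamma_pos_of_pos (by positivity)).ne'

section NormalizedLpPow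

open Fintype

variable {ι : Type*} [Fintype ι]

/-- The statistic `R = (‖x‖_p / σ)^p`. -/
noncomputable def normalizedLpPow (p σ : ℝ) (x : ι → ℝ) : ℝ :=
  ((∑ i, |x i| ^ p) ^ (1 / p) / σ) ^ p

theorem measurable_normalizedLpPow (p σ : ℝ) : Measurable (normalizedLpPow (ι := ι) p σ) := by
  unfold normalizedLpPow
  fun_prop

theorem volume_normalizedLpPow_le [Nonempty ι] {p σ : ℝ} (hp : 1 ≤ p) (hσ : 0 < σ) (t : ℝ) :
    volume {x : ι → ℝ | normalizedLpPow p σ x ≤ t} =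
      ENNReal.ofReal (lpBallVolume (card ι) p * σ ^ card ι * max t 0 ^ (card ι / p)) := by
  have hp₀ : 0 < p := by linarith
  have hnorm (x : ι → ℝ) : 0 ≤ (∑ i, |x i| ^ p) ^ (1 / p) / σ := by
    have := Finset.sum_nonneg fun i (_ : i ∈ Finset.univ) => Real.rpow_nonneg (abs_nonneg (x i)) p
    positivity
  rcases lt_or_ge t 0 with ht | ht
  · have hn : (card ι : ℝ) / p ≠ 0 := (div_pos (by exact_mod_cast card_pos) hp₀).ne'
    rw [max_eq_right ht.le, Real.zero_rpow hn, mul_zero, ENNReal.ofReal_zero,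
      measure_eq_zero_iff_ae_notMem]
    exact ae_of_all _ fun x hx => (ht.trans_le (Real.rpow_nonneg (hnorm x) p)).not_ge hx
  have hball : {x : ι → ℝ | normalizedLpPow p σ x ≤ t} =
      {x | (∑ i, |x i| ^ p) ^ (1 / p) ≤ σ * t ^ (1 / p)} := by
    ext x
    change normalizedLpPow p σ x ≤ t ↔ _
    rw [normalizedLpPow, ← Real.le_rpow_inv_iff_of_pos (hnorm x) ht hp₀, div_le_iff₀ hσ, one_div,
      mul_comm]
    rfl
  rw [hball, volume_sum_rpow_le ι hp, max_eq_left ht, ← ENNReal.ofReal_pow (by positivity),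
    ← ENNReal.ofReal_mul (by positivity), mul_pow, ← Real.rpow_natCast (t ^ (1 / p)),
    ← Real.rpow_mul ht, lpBallVolume]
  ring_nf

theorem map_normalizedLpPow_volume [Nonempty ι] {p σ : ℝ} (hp : 1 ≤ p) (hσ : 0 < σ) :
    volume.map (normalizedLpPow (ι := ι) p σ) =
      volume.withDensity (rpowDensity (lpBallVolume (card ι) p * σ ^ card ι) (card ι / p)) := by
  have hC : 0 ≤ lpBallVolume (card ι) p * σ ^ card ι :=
    mul_nonneg (lpBallVolume_nonneg (by linarith)) (by positivity)
  have ha : 0 < (card ι : ℝ) / p := div_pos (by exact_mod_cast card_pos) (by linarith)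
  have hcdf (t : ℝ) : volume.map (normalizedLpPow (ι := ι) p σ) (Iic t) =
      ENNReal.ofReal (lpBallVolume (card ι) p * σ ^ card ι * max t 0 ^ (card ι / p)) := by
    rw [Measure.map_apply (measurable_normalizedLpPow p σ) measurableSet_Iic]
    exact volume_normalizedLpPow_le hp hσ t
  refine Measure.ext_of_Iic_of_ne_top _ _ (fun t => hcdf t ▸ ENNReal.ofReal_ne_top) fun t => ?_
  rw [hcdf, withDensity_rpowDensity_Iic hC ha]

theorem map_normalizedLpPow_withDensity_exp [Nonempty ι] {p σ : ℝ} (hp : 1 ≤ p) (hσ : 0 < σ) :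
    (volume.withDensity fun x => ENNReal.ofReal (Real.exp (-normalizedLpPow (ι := ι) p σ x))).map
      (normalizedLpPow p σ) =
      ENNReal.ofReal ((2 * σ * Real.Gamma (1 / p + 1)) ^ card ι) • gammaMeasure (card ι / p) 1 := by
  have hC : 0 ≤ lpBallVolume (card ι) p * σ ^ card ι :=
    mul_nonneg (lpBallVolume_nonneg (by linarith)) (by positivity)
  have ha : 0 < (card ι : ℝ) / p := div_pos (by exact_mod_cast card_pos) (by linarith)
  have hexp : Measurable fun t : ℝ => ENNReal.ofReal (Real.exp (-t)) := by fun_prop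
  have hZ : lpBallVolume (card ι) p * σ ^ card ι * Real.Gamma (card ι / p + 1) =
      (2 * σ * Real.Gamma (1 / p + 1)) ^ card ι := by
    rw [mul_right_comm, lpBallVolume_mul_Gamma (by linarith), ← mul_pow, mul_right_comm]
  rw [← Function.comp_def (fun t : ℝ => ENNReal.ofReal (Real.exp (-t))),
    Measure.map_withDensity_comp (measurable_normalizedLpPow p σ) hexp,
    map_normalizedLpPow_volume hp hσ, ← withDensity_mul _ (measurable_rpowDensity _ _) hexp,
    rpowDensity_mul_exp_neg hC ha, hZ, withDensity_smul' _ _ ENNReal.ofReal_ne_top]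
  rfl

end NormalizedLpPow

theorem stmt_16 (k : ℕ) (hk : 1 ≤ k) (p σ : ℝ) (hp : 1 ≤ p) (hσ : 0 < σ) :
    let lpNorm : (Fin k → ℝ) → ℝ := fun x => (∑ i, |x i| ^ p) ^ (1 / p)
    let μg : Measure (Fin k → ℝ) :=
      volume.withDensity fun x => ENNReal.ofReal (Real.exp (-(lpNorm x / σ) ^ p))
    let ν : Measure (Fin k → ℝ) := (μg Set.univ)⁻¹ • μg
    Measure.map (fun x => (lpNorm x / σ) ^ p) ν = gammaMeasure ((k : ℝ) / p) 1 := by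
  intro lpNorm μg ν
  have : Nonempty (Fin k) := ⟨⟨0, hk⟩⟩
  have : IsProbabilityMeasure (gammaMeasure ((k : ℝ) / p) 1) :=
    isProbabilityMeasure_gammaMeasure (div_pos (by exact_mod_cast hk) (by linarith)) one_pos
  have hZ : ENNReal.ofReal ((2 * σ * Real.Gamma (1 / p + 1)) ^ k) ≠ 0 := by
    have := Real.Gamma_pos_of_pos (show 0 < 1 / p + 1 by positivity)
    exact (ENNReal.ofReal_pos.2 (by positivity)).ne'
  have hmap : μg.map (normalizedLpPow p σ) =
      ENNReal.ofReal ((2 * σ * Real.Gamma (1 / p + 1)) ^ k) • gammaMeasure ((k : ℝ) / p) 1 := by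
    have h := map_normalizedLpPow_withDensity_exp (ι := Fin k) hp hσ
    rw [Fintype.card_fin] at h
    exact h
  change Measure.map (normalizedLpPow p σ) ((μg univ)⁻¹ • μg) = _
  rw [Measure.map_inv_measure_univ_smul _ (measurable_normalizedLpPow p σ), hmap]
  exact Measure.inv_measure_univ_smul_smul _ hZ ENNReal.ofReal_ne_top
end
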